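/- Let N ≥ 3, 0 < s < 1, and 2 ≤ p < N/s. Let v, w ∈ D^{s,p}(ℝ^N) be such that ⟨(−Δ_p)^s w, φ⟩ ≤ ⟨(−Δ_p)^s v, φ⟩ for every φ ∈ D^{s,p}(ℝ^N) with φ ≥ 0 a.e. and φ = 0 a.e. on the set {x : w(x) ≤ v(x)}. Then w ≤ v almost everywhere in ℝ^N. -/

import Mathlib

/-!
Test with `φ = (w - v)⁺ ∈ D^{s,p}`. The increments `W = w(x) - w(y)`, `V = v(x) - v(y)` satisfy
`W - V = (w - v)(x) - (w - v)(y)`, and `φ` is a monotone function of `w - v`, so strict monotonicity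
of `t ↦ |t|^{p-2} t` makes the integrand of `⟨(−Δ_p)^s w − (−Δ_p)^s v, φ⟩` nonnegative, and
positive wherever `φ(x) ≠ φ(y)`. The hypothesis makes the integral nonpositive, hence
`φ(x) = φ(y)` for a.e. `(x, y)`: `φ` is a.e. constant, and the only constant in `L^{p*}(ℝ^N)` is `0`.
-/

open MeasureTheory Metric

noncomputable section

/-- Euclidean space `ℝ^N`. -/
abbrev RN (N : ℕ) := EuclideanSpace ℝ (Fin N)

/-- The `p`-th power of the Gagliardo seminorm `[u]_{s,p}^p`. -/
def gagliardoP (N : ℕ) (s p : ℝ) (u : RN N → ℝ) : ℝ :=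
  ∫ z : RN N × RN N, |u z.1 - u z.2| ^ p / ‖z.1 - z.2‖ ^ ((N : ℝ) + s * p)

/-- The Gagliardo seminorm `[u]_{s,p}`. -/
def gagliardoSemi (N : ℕ) (s p : ℝ) (u : RN N → ℝ) : ℝ :=
  (gagliardoP N s p u) ^ (1 / p)

/-- The critical exponent `p* = Np/(N - sp)`. -/
def pStar (N : ℕ) (s p : ℝ) : ℝ := (N : ℝ) * p / ((N : ℝ) - s * p)

/-- Membership in the homogeneous fractional Sobolev space `D^{s,p}(ℝ^N)`. -/
def DspMem (N : ℕ) (s p : ℝ) (u : RN N → ℝ) : Prop :=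
  MemLp u (ENNReal.ofReal (pStar N s p)) volume ∧
  Integrable (fun z : RN N × RN N =>
    |u z.1 - u z.2| ^ p / ‖z.1 - z.2‖ ^ ((N : ℝ) + s * p)) volume

/-- The weak pairing `⟨(−Δ_p)^s u, v⟩`. -/
def fracPair (N : ℕ) (s p : ℝ) (u v : RN N → ℝ) : ℝ :=
  ∫ z : RN N × RN N,
    |u z.1 - u z.2| ^ (p - 2) * (u z.1 - u z.2) * (v z.1 - v z.2) /
      ‖z.1 - z.2‖ ^ ((N : ℝ) + s * p)

open scoped ENNReal

theorem strictMono_abs_rpow_mul_self {q : ℝ} (hq : -1 < q) :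
    StrictMono fun t : ℝ => |t| ^ q * t := by
  have hnonneg : ∀ t : ℝ, 0 ≤ t → |t| ^ q * t = t ^ (q + 1) := fun t ht => by
    rw [abs_of_nonneg ht, Real.rpow_add_one' ht (by linarith)]
  refine strictMono_of_odd_strictMonoOn_nonneg (fun t => by simp only [abs_neg, mul_neg]) ?_
  intro a ha b hb hab
  simp only [hnonneg a ha, hnonneg b hb]
  exact Real.rpow_lt_rpow ha hab (by linarith)

theorem mul_sub_pos_of_sub_eq_sub {J g : ℝ → ℝ} (hJ : StrictMono J) (hg : Monotone g)
    {W V a b : ℝ} (h : W - V = a - b) (hab : g a ≠ g b) :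
    0 < (J W - J V) * (g a - g b) := by
  rcases hab.lt_or_gt with hlt | hlt
  · have : J W < J V := hJ (by linarith [hg.reflect_lt hlt])
    exact mul_pos_of_neg_of_neg (by linarith) (by linarith)
  · have : J V < J W := hJ (by linarith [hg.reflect_lt hlt])
    exact mul_pos (by linarith) (by linarith)

theorem rpow_add_le_two_rpow_mul {a b p : ℝ} (ha : 0 ≤ a) (hb : 0 ≤ b) (hp : 1 ≤ p) :
    (a + b) ^ p ≤ 2 ^ (p - 1) * (a ^ p + b ^ p) := by
  lift a to NNReal using ha
  lift b to NNReal using hb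
  exact_mod_cast NNReal.rpow_add_le_mul_rpow_add_rpow a b hp

theorem rpow_sub_one_mul_self {x p : ℝ} (hx : 0 ≤ x) (hp : p ≠ 0) : x ^ (p - 1) * x = x ^ p := by
  rw [← Real.rpow_add_one' hx (by rwa [sub_add_cancel]), sub_add_cancel]

theorem rpow_sub_one_mul_le_rpow_add_rpow {a b p : ℝ} (ha : 0 ≤ a) (hb : 0 ≤ b) (hp : 1 ≤ p) :
    a ^ (p - 1) * b ≤ a ^ p + b ^ p := by
  have hp1 : 0 ≤ p - 1 := by linarith
  rcases le_total a b with hab | hab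
  · calc a ^ (p - 1) * b ≤ b ^ (p - 1) * b := by gcongr
      _ = b ^ p := rpow_sub_one_mul_self hb (by linarith)
      _ ≤ a ^ p + b ^ p := le_add_of_nonneg_left (by positivity)
  · calc a ^ (p - 1) * b ≤ a ^ (p - 1) * a := by gcongr
      _ = a ^ p := rpow_sub_one_mul_self ha (by linarith)
      _ ≤ a ^ p + b ^ p := le_add_of_nonneg_right (by positivity)

section WeightedIntegrals

variable {Z : Type*} [MeasurableSpace Z] {μ : Measure Z} {K : Z → ℝ} {p : ℝ}

theorem integrable_rpow_div_of_abs_le_add {A B C : Z → ℝ} (hp : 1 ≤ p) (hK : ∀ z, 0 ≤ K z)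
    (hA : Integrable (fun z => |A z| ^ p / K z) μ) (hB : Integrable (fun z => |B z| ^ p / K z) μ)
    (hC : AEStronglyMeasurable (fun z => |C z| ^ p / K z) μ)
    (hle : ∀ z, |C z| ≤ |A z| + |B z|) :
    Integrable (fun z => |C z| ^ p / K z) μ := by
  refine ((hA.add hB).const_mul (2 ^ (p - 1))).mono' hC (ae_of_all _ fun z => ?_)
  rw [Real.norm_of_nonneg (by have := hK z; positivity), Pi.add_apply, ← add_div, ← mul_div_assoc]
  gcongr
  · exact hK z
  · exact (Real.rpow_le_rpow (abs_nonneg _) (hle z) (by linarith)).trans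
      (rpow_add_le_two_rpow_mul (abs_nonneg _) (abs_nonneg _) hp)

theorem integrable_abs_rpow_sub_two_mul_mul_div {A B : Z → ℝ} (hp : 1 < p) (hK : ∀ z, 0 ≤ K z)
    (hA : Integrable (fun z => |A z| ^ p / K z) μ) (hB : Integrable (fun z => |B z| ^ p / K z) μ)
    (hm : AEStronglyMeasurable (fun z => |A z| ^ (p - 2) * A z * B z / K z) μ) :
    Integrable (fun z => |A z| ^ (p - 2) * A z * B z / K z) μ := by
  refine (hA.add hB).mono' hm (ae_of_all _ fun z => ?_)
  have hpow : |A z| ^ (p - 2) * |A z| = |A z| ^ (p - 1) := by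
    rw [show p - 2 = p - 1 - 1 by ring]
    exact rpow_sub_one_mul_self (abs_nonneg _) (by linarith)
  rw [Real.norm_eq_abs, abs_div, abs_of_nonneg (hK z), abs_mul, abs_mul,
    abs_of_nonneg (by positivity : 0 ≤ |A z| ^ (p - 2)), hpow, Pi.add_apply, ← add_div]
  gcongr
  · exact hK z
  · exact rpow_sub_one_mul_le_rpow_add_rpow (abs_nonneg _) (abs_nonneg _) hp.le

theorem ae_eq_of_integral_mul_div_le {J g : ℝ → ℝ} (hJ : StrictMono J) (hg : Monotone g)
    (hK : ∀ z, 0 ≤ K z) {W V a b : Z → ℝ} (hWV : ∀ z, W z - V z = a z - b z)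
    (hIW : Integrable (fun z => J (W z) * (g (a z) - g (b z)) / K z) μ)
    (hIV : Integrable (fun z => J (V z) * (g (a z) - g (b z)) / K z) μ)
    (hle : ∫ z, J (W z) * (g (a z) - g (b z)) / K z ∂μ ≤
      ∫ z, J (V z) * (g (a z) - g (b z)) / K z ∂μ) :
    ∀ᵐ z ∂μ, 0 < K z → g (a z) = g (b z) := by
  set F : Z → ℝ := fun z => (J (W z) - J (V z)) * (g (a z) - g (b z)) / K z
  have hF_pos : ∀ z, g (a z) ≠ g (b z) → 0 < K z → 0 < F z := fun z hne hKz =>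
    div_pos (mul_sub_pos_of_sub_eq_sub hJ hg (hWV z) hne) hKz
  have hF_nonneg : ∀ z, 0 ≤ F z := fun z => by
    rcases (hK z).lt_or_eq with hKz | hKz
    · by_cases hz : g (a z) = g (b z)
      · simp [F, hz]
      · exact (hF_pos z hz hKz).le
    · simp [F, ← hKz]
  have hF_sub : F = fun z => J (W z) * (g (a z) - g (b z)) / K z -
      J (V z) * (g (a z) - g (b z)) / K z := by
    ext z; simp only [F]; ring
  have hF_int : Integrable F μ := hF_sub ▸ hIW.sub hIV
  have hF_zero : ∫ z, F z ∂μ = 0 := by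
    refine le_antisymm ?_ (integral_nonneg hF_nonneg)
    rw [hF_sub, integral_sub hIW hIV]
    linarith
  filter_upwards [(integral_eq_zero_iff_of_nonneg hF_nonneg hF_int).1 hF_zero] with z hz hKz
  by_contra hne
  exact (hF_pos z hne hKz).ne' hz

end WeightedIntegrals

theorem ae_eq_zero_of_memLp_of_ae_eq_prod {X : Type*} [MeasurableSpace X] {μ : Measure X}
    [SFinite μ] {φ : X → ℝ} {q : ℝ≥0∞} (hq0 : q ≠ 0) (hq : q ≠ ⊤) (hμ : μ Set.univ = ⊤)
    (hφ : MemLp φ q μ) (hconst : ∀ᵐ z ∂μ.prod μ, φ z.1 = φ z.2) :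
    φ =ᵐ[μ] 0 := by
  have : (ae μ).NeBot := ae_neBot.2 fun h => by simp [h] at hμ
  obtain ⟨x₀, hx₀⟩ := (Measure.ae_ae_of_ae_prod hconst).exists
  have hc : MemLp (fun _ => φ x₀) q μ := hφ.ae_eq (hx₀.mono fun y hy => hy.symm)
  have hx₀_zero : φ x₀ = 0 := ((memLp_const_iff hq0 hq).1 hc).resolve_right (by simp [hμ])
  filter_upwards [hx₀] with y hy
  rw [← hy, hx₀_zero, Pi.zero_apply]

theorem pStar_pos {N : ℕ} {s p : ℝ} (hN : 0 < N) (hp : 0 < p) (hsp : s * p < N) :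
    0 < pStar N s p :=
  div_pos (by positivity) (sub_pos.2 hsp)

theorem aemeasurable_sub_fst_snd {X : Type*} [MeasureSpace X] [SFinite (volume : Measure X)]
    {u : X → ℝ} (hu : AEStronglyMeasurable u) :
    AEMeasurable fun z : X × X => u z.1 - u z.2 := by
  rw [Measure.volume_eq_prod]
  exact (hu.comp_fst.sub hu.comp_snd).aemeasurable

namespace DspMem

variable {N : ℕ} {s p : ℝ} {u v w : RN N → ℝ}

theorem max_sub_zero (hp : 1 ≤ p) (hw : DspMem N s p w) (hv : DspMem N s p v) :
    DspMem N s p fun x => max (w x - v x) 0 := by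
  have hLp : MemLp (fun x => max (w x - v x) 0) _ volume := (hw.1.sub hv.1).pos_part
  have hm := aemeasurable_sub_fst_snd hLp.1
  refine ⟨hLp, integrable_rpow_div_of_abs_le_add hp (fun z => by positivity)
    hw.2 hv.2 (AEMeasurable.aestronglyMeasurable (by fun_prop)) fun z => ?_⟩
  calc |max (w z.1 - v z.1) 0 - max (w z.2 - v z.2) 0|
      ≤ |(w z.1 - w z.2) - (v z.1 - v z.2)| := by
        rw [sub_sub_sub_comm]
        exact abs_max_sub_max_le_abs _ _ 0
    _ ≤ |w z.1 - w z.2| + |v z.1 - v z.2| := abs_sub _ _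

theorem integrable_fracPair_integrand (hp : 1 < p) (hu : DspMem N s p u) (hv : DspMem N s p v) :
    Integrable fun z : RN N × RN N =>
      |u z.1 - u z.2| ^ (p - 2) * (u z.1 - u z.2) * (v z.1 - v z.2) /
        ‖z.1 - z.2‖ ^ ((N : ℝ) + s * p) := by
  have hum := aemeasurable_sub_fst_snd hu.1.1
  have hvm := aemeasurable_sub_fst_snd hv.1.1
  exact integrable_abs_rpow_sub_two_mul_mul_div hp (fun z => by positivity) hu.2 hv.2
    (AEMeasurable.aestronglyMeasurable (by fun_prop))

end DspMem

theorem ae_max_sub_eq_of_fracPair_le {N : ℕ} {s p : ℝ} {v w : RN N → ℝ} (hp : 1 < p)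
    (hv : DspMem N s p v) (hw : DspMem N s p w)
    (hle : fracPair N s p w (fun x => max (w x - v x) 0) ≤
      fracPair N s p v (fun x => max (w x - v x) 0)) :
    ∀ᵐ z : RN N × RN N, max (w z.1 - v z.1) 0 = max (w z.2 - v z.2) 0 := by
  have hK : ∀ z : RN N × RN N, 0 ≤ ‖z.1 - z.2‖ ^ ((N : ℝ) + s * p) := fun z => by positivity
  have hφ := hw.max_sub_zero hp.le hv
  filter_upwards [ae_eq_of_integral_mul_div_le (strictMono_abs_rpow_mul_self (by linarith))
    (fun _ _ h => max_le_max_right 0 h) hK (fun z => sub_sub_sub_comm _ _ _ _)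
    (hw.integrable_fracPair_integrand hp hφ) (hv.integrable_fracPair_integrand hp hφ) hle]
    with z hz
  rcases (hK z).lt_or_eq with hKz | hKz
  · exact hz hKz
  · obtain ⟨hnorm, -⟩ := (Real.rpow_eq_zero_iff_of_nonneg (norm_nonneg _)).1 hKz.symm
    rw [sub_eq_zero.1 (norm_eq_zero.1 hnorm)]

theorem comparison_via_test_functions_general (N : ℕ) (hN : 3 ≤ N) (s p : ℝ)
    (hs0 : 0 < s) (hp : 2 ≤ p) (hpN : p < (N : ℝ) / s)
    (v w : RN N → ℝ) (hv : DspMem N s p v) (hw : DspMem N s p w)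
    (h : ∀ φ : RN N → ℝ, DspMem N s p φ →
      (∀ᵐ x ∂(volume : Measure (RN N)), 0 ≤ φ x) →
      (∀ᵐ x ∂(volume : Measure (RN N)), w x ≤ v x → φ x = 0) →
      fracPair N s p w φ ≤ fracPair N s p v φ) :
    ∀ᵐ x ∂(volume : Measure (RN N)), w x ≤ v x := by
  have hp1 : 1 < p := by linarith
  set φ : RN N → ℝ := fun x => max (w x - v x) 0
  have hφ : DspMem N s p φ := hw.max_sub_zero hp1.le hv
  have hpair := h φ hφ (ae_of_all _ fun x => le_max_right _ _)
    (ae_of_all _ fun x hx => max_eq_right (sub_nonpos.2 hx))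
  have hconst := ae_max_sub_eq_of_fracPair_le hp1 hv hw hpair
  rw [Measure.volume_eq_prod] at hconst
  have : Nonempty (Fin N) := ⟨⟨0, by omega⟩⟩
  have hpStar : 0 < pStar N s p :=
    pStar_pos (by omega) (by linarith) (by linarith [(lt_div_iff₀' hs0).1 hpN])
  have hφ_zero : φ =ᵐ[volume] 0 := ae_eq_zero_of_memLp_of_ae_eq_prod
    (ENNReal.ofReal_pos.2 hpStar).ne' ENNReal.ofReal_ne_top
    (measure_univ_of_isAddLeftInvariant volume) hφ.1 hconst
  filter_upwards [hφ_zero] with x hx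
  exact sub_nonpos.1 (max_eq_right_iff.1 hx)

/-- If `v, w ∈ D^{s,p}(ℝ^N)` and `⟨(−Δ_p)^s w, φ⟩ ≤ ⟨(−Δ_p)^s v, φ⟩` for every
non-negative `φ ∈ D^{s,p}(ℝ^N)` vanishing a.e. on `{w ≤ v}`, then `w ≤ v` a.e. -/
theorem comparison_via_test_functions (N : ℕ) (hN : 3 ≤ N) (s p : ℝ)
    (hs0 : 0 < s) (hs1 : s < 1) (hp : 2 ≤ p) (hpN : p < (N : ℝ) / s)
    (v w : RN N → ℝ) (hv : DspMem N s p v) (hw : DspMem N s p w)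
    (h : ∀ φ : RN N → ℝ, DspMem N s p φ →
      (∀ᵐ x ∂(volume : Measure (RN N)), 0 ≤ φ x) →
      (∀ᵐ x ∂(volume : Measure (RN N)), w x ≤ v x → φ x = 0) →
      fracPair N s p w φ ≤ fracPair N s p v φ) :
    ∀ᵐ x ∂(volume : Measure (RN N)), w x ≤ v x :=
  comparison_via_test_functions_general N hN s p hs0 hp hpN v w hv hw h
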